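/- arXiv:2007.00795 — 6 statements merged into one kernel-verified Lean document; each statement's English description precedes it below -/
import Mathlib

section
/- If a baseline value function f (with f = 0 at terminal states) is improvable with respect to a policy π, i.e. A^f(s,π) ≥ 0 for all states s, then the value function of π dominates f pointwise: V^π(s) ≥ f(s) for all states s. -/
open Finset

/-- A finite-horizon Markov decision process with transition kernel `P` and reward `r`.
Time-dependence (nonstationarity) is handled by indexing functions by the time step. -/
structure MDP (S A : Type) where
  P : S → A → S → ℝ
  r : S → A → ℝ

variable {S A : Type} [Fintype S] [DecidableEq S] [Fintype A]

/-- Expectation of `g` under the (sub)distribution `d`. -/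
def expect (d : S → ℝ) (g : S → ℝ) : ℝ := ∑ s, d s * g s

/-- `n`-step value function of a (stationary) stochastic policy `π`. -/
def MDP.val (M : MDP S A) (π : S → A → ℝ) : ℕ → S → ℝ
  | 0, _ => 0
  | n + 1, s => ∑ a, π s a * (M.r s a + ∑ s', M.P s a s' * M.val π n s')

/-- State distribution at time `t` obtained by running `π` from `d0`. -/
def MDP.stateDist (M : MDP S A) (π : S → A → ℝ) (d0 : S → ℝ) : ℕ → S → ℝ
  | 0 => d0
  | t + 1 => fun s' => ∑ s, ∑ a, M.stateDist π d0 t s * π s a * M.P s a s'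

/-- One-step advantage `A^f(s,a)` of a time-indexed baseline value function `f` at time `t`. -/
def MDP.advStep (M : MDP S A) (f : ℕ → S → ℝ) (t : ℕ) (s : S) (a : A) : ℝ :=
  M.r s a + ∑ s', M.P s a s' * f (t + 1) s' - f t s

/-- `A^f(s,π) = E_{a∼π(·|s)}[A^f(s,a)]`. -/
def MDP.advStepPi (M : MDP S A) (f : ℕ → S → ℝ) (π : S → A → ℝ) (t : ℕ) (s : S) : ℝ :=
  ∑ a, π s a * M.advStep f t s a

/-- Distribution over states reached from `s` after `n` steps of `π`. -/
def MDP.push (M : MDP S A) (π : S → A → ℝ) : ℕ → S → S → ℝ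
  | 0, s => fun s' => if s' = s then 1 else 0
  | n + 1, s => fun s'' => ∑ a, π s a * ∑ s', M.P s a s' * M.push π n s' s''

/-- `i`-step advantage `A^{f,π}_{(i)}(s_t, π)` (action marginalized) for horizon `T`:
rewards from `t` for `min (i+1) (T-t)` steps plus `f` at the reached state, minus `f t s`.
Rewards and `f` are zero beyond the horizon, encoded by clipping at `T - t`. -/
def MDP.advI (M : MDP S A) (T : ℕ) (f : ℕ → S → ℝ) (π : S → A → ℝ) (t i : ℕ) (s : S) : ℝ :=
  M.val π (min (i + 1) (T - t)) s
    + expect (M.push π (min (i + 1) (T - t)) s) (f (t + min (i + 1) (T - t))) - f t s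

/-- `i`-step advantage `A^{f,π}_{(i)}(s_t, a_t)` (action version) for horizon `T`. -/
def MDP.advIA (M : MDP S A) (T : ℕ) (f : ℕ → S → ℝ) (π : S → A → ℝ) (t i : ℕ) (s : S) (a : A) : ℝ :=
  M.r s a + ∑ s', M.P s a s' *
      (M.val π (min i (T - t - 1)) s'
        + expect (M.push π (min i (T - t - 1)) s') (f (t + 1 + min i (T - t - 1))))
    - f t s

/-- λ-weighted advantage `A^{f,π}_λ(s,a) = (1-λ)Σ_{i≥0} λ^i A^{f,π}_{(i)}(s,a)`, written in the
equivalent closed form using that `A_{(i)}` stabilizes for `i ≥ T - t - 1` (this form is also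
valid at `λ = 1`, where it is the limit `Q^π - f`, and at `λ = 0` with `0^0 = 1`). -/
def MDP.advL (M : MDP S A) (T : ℕ) (f : ℕ → S → ℝ) (π : S → A → ℝ) (lam : ℝ)
    (t : ℕ) (s : S) (a : A) : ℝ :=
  (1 - lam) * ∑ i ∈ Finset.range (T - t - 1), lam ^ i * M.advIA T f π t i s a
    + lam ^ (T - t - 1) * M.advIA T f π t (T - t - 1) s a

/-- `A^{f,π}_λ(s,π)`. -/
def MDP.advLPi (M : MDP S A) (T : ℕ) (f : ℕ → S → ℝ) (π : S → A → ℝ) (lam : ℝ)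
    (t : ℕ) (s : S) : ℝ :=
  ∑ a, π s a * M.advL T f π lam t s a

/-- `n`-step value of a deterministic, nonstationary policy `πm` starting at time `t`. -/
def MDP.valD (M : MDP S A) (πm : ℕ → S → A) : ℕ → ℕ → S → ℝ
  | _, 0, _ => 0
  | t, n + 1, s => M.r s (πm t s) + ∑ s', M.P s (πm t s) s' * M.valD πm (t + 1) n s'

/-- Distribution over states reached from `s` at time `t` after `n` steps of the deterministic
nonstationary policy `πm`. -/
def MDP.pushD (M : MDP S A) (πm : ℕ → S → A) : ℕ → ℕ → S → S → ℝ
  | _, 0, s => fun s' => if s' = s then 1 else 0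
  | t, n + 1, s => fun s'' => ∑ s', M.P s (πm t s) s' * M.pushD πm (t + 1) n s' s''

/-- **Improvable baselines are dominated by the value function.** If the baseline value
function `f` (vanishing at the horizon) is improvable w.r.t. `π`, i.e. `A^f(s,π) ≥ 0` at all
states and times, then `V^π(s) ≥ f(s)` at all states and times. -/
theorem improvable_implies_value_dominates
    {S A : Type} [Fintype S] [Fintype A] (M : MDP S A) (T : ℕ)
    (π : S → A → ℝ) (hπ1 : ∀ s, ∑ a, π s a = 1) (hπ0 : ∀ s a, 0 ≤ π s a)
    (hP0 : ∀ s a s', 0 ≤ M.P s a s') (hP1 : ∀ s a, ∑ s', M.P s a s' = 1)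
    (f : ℕ → S → ℝ) (hfT : ∀ s, f T s = 0)
    (himp : ∀ t, t < T → ∀ s, 0 ≤ M.advStepPi f π t s) :
    ∀ t ≤ T, ∀ s, f t s ≤ M.val π (T - t) s := by
  suffices h : ∀ k t, t + k = T → ∀ s, f t s ≤ M.val π k s by
    intro t ht s
    exact h (T - t) t (by omega) s
  intro k
  induction k with
  | zero =>
    intro t ht s
    have : t = T := by omega
    subst this
    simp [MDP.val, hfT]
  | succ n ih =>
    intro t ht s
    have hlt : t < T := by omega
    have hadv := himp t hlt s
    have hexp : f t s ≤ ∑ a, π s a * (M.r s a + ∑ s', M.P s a s' * f (t + 1) s') := by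
      have h1 : M.advStepPi f π t s
          = (∑ a, π s a * (M.r s a + ∑ s', M.P s a s' * f (t + 1) s')) - f t s := by
        simp only [MDP.advStepPi, MDP.advStep, mul_sub, Finset.sum_sub_distrib,
          ← Finset.sum_mul, hπ1 s, one_mul]
      linarith [hadv, h1 ▸ hadv]
    refine le_trans hexp ?_
    show _ ≤ ∑ a, π s a * (M.r s a + ∑ s', M.P s a s' * M.val π n s')
    refine Finset.sum_le_sum fun a _ => ?_
    refine mul_le_mul_of_nonneg_left ?_ (hπ0 s a)
    exact add_le_add_right (Finset.sum_le_sum fun s' _ =>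
      mul_le_mul_of_nonneg_left (ih (t + 1) (by omega) s') (hP0 s a s')) _
end

section
/- Let {π^k}_{k∈[K]} be K policies with value functions V^k, and define f^max(s) = max_{k∈[K]} V^k(s). Define the max-following policy π• by π•(·|s) = π^{k_s}(·|s) where k_s = argmax_k V^k(s). Then f^max is improvable with respect to π•, i.e. A^{f^max}(s, π•) ≥ 0 for all states s. -/
open Finset

variable {S A : Type} [Fintype S] [DecidableEq S] [Fintype A]

/-- **The max-aggregated baseline is improvable w.r.t. the max-following policy.**
Given oracle policies `πo k` with values `V^k`, let `fmax(s) = max_k V^k(s)` (witnessed by the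
selector `ks`, so `π•(·|s) = πo (ks s)(·|s)` follows the best oracle at each state and time).
Then `A^{fmax}(s, π•) ≥ 0` at every state and time. -/
theorem fmax_improvable_wrt_max_following
    {S A : Type} [Fintype S] [Fintype A] (M : MDP S A) (T : ℕ) (K : ℕ)
    (πo : Fin K → S → A → ℝ)
    (hπ1 : ∀ k s, ∑ a, πo k s a = 1) (hπ0 : ∀ k s a, 0 ≤ πo k s a)
    (hP0 : ∀ s a s', 0 ≤ M.P s a s') (hP1 : ∀ s a, ∑ s', M.P s a s' = 1)
    (ks : ℕ → S → Fin K)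
    (hks : ∀ t s k, M.val (πo k) (T - t) s ≤ M.val (πo (ks t s)) (T - t) s)
    (fmax : ℕ → S → ℝ)
    (hfmax : ∀ t s, fmax t s = M.val (πo (ks t s)) (T - t) s) :
    ∀ t, t < T → ∀ s,
      0 ≤ M.advStepPi fmax (fun s' a => πo (ks t s') s' a) t s := by
  intro t ht s
  set k := ks t s with hk
  have hT : T - t = (T - t - 1) + 1 := by omega
  have hstep : fmax t s
      = ∑ a, πo k s a * (M.r s a + ∑ s', M.P s a s' * M.val (πo k) (T - t - 1) s') := by
    rw [hfmax, hT]; rfl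
  have hle : ∀ s', M.val (πo k) (T - t - 1) s' ≤ fmax (t + 1) s' := by
    intro s'
    rw [hfmax]
    have h := hks (t + 1) s' k
    have : T - (t + 1) = T - t - 1 := by omega
    rwa [this] at h
  simp only [MDP.advStepPi, MDP.advStep]
  have hexp : ∑ a, πo k s a * (M.r s a + ∑ s', M.P s a s' * fmax (t + 1) s' - fmax t s)
      = (∑ a, πo k s a * (M.r s a + ∑ s', M.P s a s' * fmax (t + 1) s')) - fmax t s := by
    simp [mul_sub, Finset.sum_sub_distrib, ← Finset.sum_mul, hπ1]
  calc (0:ℝ) = fmax t s - fmax t s := by ring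
    _ ≤ (∑ a, πo k s a * (M.r s a + ∑ s', M.P s a s' * fmax (t + 1) s')) - fmax t s := by
        apply sub_le_sub_right
        rw [hstep]
        apply Finset.sum_le_sum
        intro a _
        apply mul_le_mul_of_nonneg_left _ (hπ0 k s a)
        apply add_le_add_right
        apply Finset.sum_le_sum
        intro s' _
        exact mul_le_mul_of_nonneg_left (hle s') (hP0 s a s')
    _ = ∑ a, πo k s a * (M.r s a + ∑ s', M.P s a s' * fmax (t + 1) s' - fmax t s) := hexp.symm
end

section
/- Let {π^k}_{k∈[K]} be K policies, f^max(s) = max_k V^k(s), and let π^max be the policy that deterministically picks a_s = argmax_{a∈A} A^{f^max}(s,a) in each state s. Then V^{π^max}(s) ≥ f^max(s) ≥ V^k(s) for every state s and every k ∈ [K]; that is, π^max is uniformly at least as good as every oracle policy. -/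
open Finset

variable {S A : Type} [Fintype S] [DecidableEq S] [Fintype A]

/-- **Max-aggregation dominates every oracle.** With `fmax(s) = max_k V^k(s)` and `π^max` the
deterministic policy picking `argmax_a A^{fmax}(s,a)` at each state, the value of `π^max`
dominates `fmax`, which dominates every oracle's value: `V^{π^max}(s) ≥ fmax(s) ≥ V^k(s)`
for every state, time, and `k`. -/
theorem pimax_dominates_all_oracles
    {S A : Type} [Fintype S] [Fintype A] (M : MDP S A) (T : ℕ) (K : ℕ)
    (πo : Fin K → S → A → ℝ)
    (hπ1 : ∀ k s, ∑ a, πo k s a = 1) (hπ0 : ∀ k s a, 0 ≤ πo k s a)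
    (hP0 : ∀ s a s', 0 ≤ M.P s a s') (hP1 : ∀ s a, ∑ s', M.P s a s' = 1)
    (ks : ℕ → S → Fin K)
    (hks : ∀ t s k, M.val (πo k) (T - t) s ≤ M.val (πo (ks t s)) (T - t) s)
    (fmax : ℕ → S → ℝ)
    (hfmax : ∀ t s, fmax t s = M.val (πo (ks t s)) (T - t) s)
    (πm : ℕ → S → A)
    (hgreedy : ∀ t, t < T → ∀ s a, M.advStep fmax t s a ≤ M.advStep fmax t s (πm t s)) :
    ∀ t ≤ T, ∀ s k,
      M.val (πo k) (T - t) s ≤ fmax t s ∧ fmax t s ≤ M.valD πm t (T - t) s := by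
  have key : ∀ n, ∀ t, t + n = T → ∀ s, fmax t s ≤ M.valD πm t n s := by
    intro n
    induction n with
    | zero =>
      intro t ht s
      have hTt : T - t = 0 := by omega
      simp [hfmax, hTt, MDP.val, MDP.valD]
    | succ n ih =>
      intro t ht s
      have htT : t < T := by omega
      have hTt : T - t = n + 1 := by omega
      have hTt1 : T - (t + 1) = n := by omega
      set π := πo (ks t s) with hπ
      have h1 : fmax t s = ∑ a, π s a * (M.r s a + ∑ s', M.P s a s' * M.val π n s') := by
        rw [hfmax, hTt]; rfl
      have h2 : ∀ s', M.val π n s' ≤ fmax (t + 1) s' := by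
        intro s'
        rw [hfmax (t + 1) s', hTt1]
        have := hks (t + 1) s' (ks t s)
        rwa [hTt1] at this
      have h3 : fmax t s ≤ ∑ a, π s a * (M.r s a + ∑ s', M.P s a s' * fmax (t + 1) s') := by
        rw [h1]
        apply Finset.sum_le_sum
        intro a _
        apply mul_le_mul_of_nonneg_left _ (hπ0 _ _ _)
        apply add_le_add_right
        apply Finset.sum_le_sum
        intro s' _
        exact mul_le_mul_of_nonneg_left (h2 s') (hP0 _ _ _)
      have h4 : ∀ a, M.r s a + ∑ s', M.P s a s' * fmax (t + 1) s'
          ≤ M.r s (πm t s) + ∑ s', M.P s (πm t s) s' * fmax (t + 1) s' := by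
        intro a
        have := hgreedy t htT s a
        simp only [MDP.advStep] at this
        linarith
      have h5 : ∑ a, π s a * (M.r s a + ∑ s', M.P s a s' * fmax (t + 1) s')
          ≤ M.r s (πm t s) + ∑ s', M.P s (πm t s) s' * fmax (t + 1) s' := by
        calc ∑ a, π s a * (M.r s a + ∑ s', M.P s a s' * fmax (t + 1) s')
            ≤ ∑ a, π s a * (M.r s (πm t s) + ∑ s', M.P s (πm t s) s' * fmax (t + 1) s') := by
              apply Finset.sum_le_sum
              intro a _
              exact mul_le_mul_of_nonneg_left (h4 a) (hπ0 _ _ _)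
          _ = (∑ a, π s a) * (M.r s (πm t s) + ∑ s', M.P s (πm t s) s' * fmax (t + 1) s') := by
              rw [Finset.sum_mul]
          _ = _ := by rw [hπ1]; ring
      have h6 : M.r s (πm t s) + ∑ s', M.P s (πm t s) s' * fmax (t + 1) s'
          ≤ M.valD πm t (n + 1) s := by
        show _ ≤ M.r s (πm t s) + ∑ s', M.P s (πm t s) s' * M.valD πm (t + 1) n s'
        apply add_le_add_right
        apply Finset.sum_le_sum
        intro s' _
        exact mul_le_mul_of_nonneg_left (ih (t + 1) (by omega) s') (hP0 _ _ _)
      linarith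
  intro t ht s k
  constructor
  · rw [hfmax]; exact hks t s k
  · exact key (T - t) t (by omega) s
end

section
/- (Non-even performance difference lemma) Let π be a policy and f any (possibly history-dependent) function with E_{h_T ∼ d_T^π}[f(h_T)] = 0. Let 0 = τ_0 < τ_1 < ... < τ_I = T be integers. Then V^π(d_0) − f(d_0) = Σ_{k=0}^{I−1} E_{h_{τ_k} ∼ d_{τ_k}^π}[A^{f,π}_{(i_k)}(h_{τ_k}, π)], where i_k = τ_{k+1} − τ_k − 1. -/
open Finset

variable {S A : Type} [Fintype S] [DecidableEq S] [Fintype A]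

lemma MDP.val_split (M : MDP S A) (π : S → A → ℝ) (n m : ℕ) :
    ∀ s, M.val π (n + m) s = M.val π n s + ∑ s', M.push π n s s' * M.val π m s' := by
  induction n with
  | zero =>
    intro s
    simp [MDP.val, MDP.push, ite_mul]
  | succ n ih =>
    intro s
    have h : n + 1 + m = (n + m) + 1 := by ring
    rw [h]
    simp only [MDP.val, MDP.push]
    simp only [ih, mul_add, Finset.mul_sum, Finset.sum_mul, Finset.sum_add_distrib, add_assoc]
    congr 1
    congr 1
    conv_rhs => rw [Finset.sum_comm]
    refine Finset.sum_congr rfl fun a _ => ?_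
    conv_rhs => rw [Finset.sum_comm]
    refine Finset.sum_congr rfl fun s' _ => ?_
    refine Finset.sum_congr rfl fun x _ => ?_
    ring

lemma expect_push (M : MDP S A) (π : S → A → ℝ) (d0 : S → ℝ) (n : ℕ) :
    ∀ t g, expect (M.stateDist π d0 t) (fun s => expect (M.push π n s) g)
      = expect (M.stateDist π d0 (t + n)) g := by
  induction n with
  | zero =>
    intro t g
    simp [_root_.expect, MDP.push, ite_mul]
  | succ n ih =>
    intro t g
    have h : t + (n + 1) = (t + 1) + n := by ring
    rw [h, ← ih (t + 1) g]
    simp only [_root_.expect, MDP.push, MDP.stateDist]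
    simp only [Finset.mul_sum, Finset.sum_mul]
    conv_rhs => enter [2, x]; rw [Finset.sum_comm]
    conv_rhs => rw [Finset.sum_comm]
    refine Finset.sum_congr rfl fun s _ => ?_
    conv_lhs => rw [Finset.sum_comm]
    conv_lhs => enter [2, a]; rw [Finset.sum_comm]
    conv_rhs => enter [2, x]; rw [Finset.sum_comm]
    conv_rhs => rw [Finset.sum_comm]
    refine Finset.sum_congr rfl fun a _ => ?_
    refine Finset.sum_congr rfl fun s' _ => ?_
    refine Finset.sum_congr rfl fun s'' _ => ?_
    ring


lemma expect_add (d g h : S → ℝ) :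
    expect d (fun s => g s + h s) = expect d g + expect d h := by
  simp [_root_.expect, mul_add, Finset.sum_add_distrib]

lemma expect_sub (d g h : S → ℝ) :
    expect d (fun s => g s - h s) = expect d g - expect d h := by
  simp [_root_.expect, mul_sub, Finset.sum_sub_distrib]

/-- **Non-even performance difference lemma.** Let `0 = τ_0 < τ_1 < ... < τ_I = T` and let `f`
be a time-indexed function with `E_{d_T^π}[f] = 0`. Then
`V^π(d_0) − f(d_0) = Σ_{k<I} E_{s∼d_{τ_k}^π}[A^{f,π}_{(i_k)}(s, π)]` with
`i_k = τ_{k+1} − τ_k − 1`. -/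
theorem noneven_performance_difference_lemma
    {S A : Type} [Fintype S] [DecidableEq S] [Fintype A] (M : MDP S A) (T : ℕ)
    (π : S → A → ℝ) (hπ1 : ∀ s, ∑ a, π s a = 1)
    (d0 : S → ℝ) (f : ℕ → S → ℝ)
    (I : ℕ) (τ : ℕ → ℕ) (hτ0 : τ 0 = 0) (hτI : τ I = T)
    (hτmono : ∀ k, k < I → τ k < τ (k + 1))
    (hfT : expect (M.stateDist π d0 T) (f T) = 0) :
    expect d0 (M.val π T) - expect d0 (f 0) =
      ∑ k ∈ Finset.range I,
        expect (M.stateDist π d0 (τ k))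
          (fun s => M.advI T f π (τ k) (τ (k + 1) - τ k - 1) s) := by
  have hτle : ∀ j, j ≤ I → τ j ≤ T := by
    have main : ∀ d j, j + d = I → τ j ≤ T := by
      intro d
      induction d with
      | zero =>
        intro j hj
        have hjI : j = I := by omega
        subst hjI; rw [hτI]
      | succ d ih =>
        intro j hj
        have h1 := hτmono j (by omega)
        have h2 := ih (j + 1) (by omega)
        omega
    intro j hj
    exact main (I - j) j (by omega)
  have key : ∀ k, k < I →
      expect (M.stateDist π d0 (τ k))
        (fun s => M.advI T f π (τ k) (τ (k + 1) - τ k - 1) s)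
      = (expect (M.stateDist π d0 (τ k)) (M.val π (T - τ k))
          - expect (M.stateDist π d0 (τ k)) (f (τ k)))
        - (expect (M.stateDist π d0 (τ (k + 1))) (M.val π (T - τ (k + 1)))
          - expect (M.stateDist π d0 (τ (k + 1))) (f (τ (k + 1)))) := by
    intro k hk
    have h1 : τ k < τ (k + 1) := hτmono k hk
    have h2 : τ (k + 1) ≤ T := hτle (k + 1) hk
    set t := τ k with ht
    set t' := τ (k + 1) with ht'
    have hmin : min (t' - t - 1 + 1) (T - t) = t' - t := by omega
    have htn : t + (t' - t) = t' := by omega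
    have hTt : T - t = (t' - t) + (T - t') := by omega
    have e1 : expect (M.stateDist π d0 t) (fun s => expect (M.push π (t' - t) s) (f t'))
        = expect (M.stateDist π d0 t') (f t') := by
      rw [expect_push, htn]
    have e2 : expect (M.stateDist π d0 t) (M.val π (T - t))
        = expect (M.stateDist π d0 t) (M.val π (t' - t))
          + expect (M.stateDist π d0 t') (M.val π (T - t')) := by
      rw [hTt]
      rw [show M.val π ((t' - t) + (T - t'))
          = fun s => M.val π (t' - t) s + expect (M.push π (t' - t) s) (M.val π (T - t'))
          from funext fun s => M.val_split π _ _ s]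
      rw [expect_add, expect_push, htn]
    have e3 : expect (M.stateDist π d0 t)
        (fun s => M.val π (t' - t) s + expect (M.push π (t' - t) s) (f t') - f t s)
        = expect (M.stateDist π d0 t) (M.val π (t' - t))
          + expect (M.stateDist π d0 t) (fun s => expect (M.push π (t' - t) s) (f t'))
          - expect (M.stateDist π d0 t) (f t) := by
      simp [_root_.expect, mul_add, mul_sub, Finset.sum_add_distrib, Finset.sum_sub_distrib]
    simp only [MDP.advI, hmin, htn]
    rw [e3, e1, e2]
    ring
  rw [Finset.sum_congr rfl (fun k hk => key k (Finset.mem_range.mp hk))]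
  rw [Finset.sum_range_sub' (fun k => expect (M.stateDist π d0 (τ k)) (M.val π (T - τ k))
      - expect (M.stateDist π d0 (τ k)) (f (τ k))) I]
  rw [hτ0, hτI]
  have hv0 : expect (M.stateDist π d0 T) (M.val π (T - T)) = 0 := by
    simp [_root_.expect, MDP.val, Nat.sub_self]
  have hd0 : M.stateDist π d0 0 = d0 := rfl
  rw [hv0, hfT, hd0, Nat.sub_zero]
  ring
end

section
/- For any λ ∈ [0,1], if π^max is the greedy policy with respect to A^{f^max} (i.e. it maximizes the one-step advantage of f^max in each state), then for every i ≥ 0 and every state s, the i-step advantage satisfies A^{f^max,π^max}_{(i)}(s, π^max) ≥ 0, and consequently the λ-weighted advantage A^{f^max,π^max}_λ(s, π^max) ≥ 0 and the λ-weighted online loss ℓ_n(π^max; λ) = −(1−λ)T·E_{s∼d^{π_n}}[A^{f^max,π^max}_λ(s,π^max)] − λ·E_{s∼d_0}[A^{f^max,π^max}_λ(s,π^max)] is nonpositive. -/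
open Finset

variable {S A : Type} [Fintype S] [DecidableEq S] [Fintype A]

variable {S A : Type} [Fintype S] [DecidableEq S] [Fintype A]

/-- `i`-step advantage `A^{f,πm}_{(i)}(s_t, πm)` of a deterministic nonstationary policy. -/
def MDP.advID (M : MDP S A) (T : ℕ) (f : ℕ → S → ℝ) (πm : ℕ → S → A) (t i : ℕ) (s : S) : ℝ :=
  M.valD πm t (min (i + 1) (T - t)) s
    + expect (M.pushD πm t (min (i + 1) (T - t)) s) (f (t + min (i + 1) (T - t))) - f t s

/-- λ-weighted advantage of a deterministic nonstationary policy (closed form of the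
geometric mixture `(1-λ)Σ_i λ^i A_{(i)}`). -/
def MDP.advLD (M : MDP S A) (T : ℕ) (f : ℕ → S → ℝ) (πm : ℕ → S → A) (lam : ℝ)
    (t : ℕ) (s : S) : ℝ :=
  (1 - lam) * ∑ i ∈ Finset.range (T - t - 1), lam ^ i * M.advID T f πm t i s
    + lam ^ (T - t - 1) * M.advID T f πm t (T - t - 1) s

/-- **Nonnegativity of the multi-step advantages of the greedy policy `π^max`, and
nonpositivity of the λ-weighted online loss at `π^max`.** For any `λ ∈ [0,1]`: every `i`-step
advantage `A^{fmax,πmax}_{(i)}(s,π^max)` is nonnegative, hence the λ-weighted advantage is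
nonnegative and `ℓ_n(π^max;λ) ≤ 0`. -/
theorem greedy_policy_advantages_nonneg_and_loss_nonpos
    (M : MDP S A) (T : ℕ) (K : ℕ)
    (πo : Fin K → S → A → ℝ)
    (hπ1 : ∀ k s, ∑ a, πo k s a = 1) (hπ0 : ∀ k s a, 0 ≤ πo k s a)
    (hP0 : ∀ s a s', 0 ≤ M.P s a s') (hP1 : ∀ s a, ∑ s', M.P s a s' = 1)
    (ks : ℕ → S → Fin K)
    (hks : ∀ t s k, M.val (πo k) (T - t) s ≤ M.val (πo (ks t s)) (T - t) s)
    (fmax : ℕ → S → ℝ)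
    (hfmax : ∀ t s, fmax t s = M.val (πo (ks t s)) (T - t) s)
    (πm : ℕ → S → A)
    (hgreedy : ∀ t, t < T → ∀ s a, M.advStep fmax t s a ≤ M.advStep fmax t s (πm t s))
    (lam : ℝ) (hlam0 : 0 ≤ lam) (hlam1 : lam ≤ 1)
    (πn : S → A → ℝ) (hπn1 : ∀ s, ∑ a, πn s a = 1) (hπn0 : ∀ s a, 0 ≤ πn s a)
    (d0 : S → ℝ) (hd0 : ∀ s, 0 ≤ d0 s) :
    (∀ t, t < T → ∀ i s, 0 ≤ M.advID T fmax πm t i s) ∧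
    (∀ t, t < T → ∀ s, 0 ≤ M.advLD T fmax πm lam t s) ∧
    (-(1 - lam) * (T : ℝ) * ((T : ℝ)⁻¹ * ∑ t ∈ Finset.range T,
          expect (M.stateDist πn d0 t) (M.advLD T fmax πm lam t))
        - lam * expect d0 (M.advLD T fmax πm lam 0) ≤ 0) := by

  -- one-step inequality for the greedy policy
  have hstep : ∀ t, t < T → ∀ s, fmax t s ≤ M.r s (πm t s) + ∑ s', M.P s (πm t s) s' * fmax (t+1) s' := by
    intro t ht s
    set k := ks t s with hk
    have hTt : T - t = (T - t - 1) + 1 := by omega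
    have hval : fmax t s = ∑ a, πo k s a * (M.r s a + ∑ s', M.P s a s' * M.val (πo k) (T - t - 1) s') := by
      rw [hfmax t s, hk, hTt]; rfl
    have h1 : fmax t s ≤ ∑ a, πo k s a * (M.r s a + ∑ s', M.P s a s' * fmax (t+1) s') := by
      rw [hval]
      apply Finset.sum_le_sum
      intro a _
      apply mul_le_mul_of_nonneg_left _ (hπ0 k s a)
      apply add_le_add_right
      apply Finset.sum_le_sum
      intro s' _
      apply mul_le_mul_of_nonneg_left _ (hP0 s a s')
      rw [hfmax (t+1) s']
      have he : T - (t+1) = T - t - 1 := by omega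
      have hh := hks (t+1) s' k
      rw [he] at hh
      exact hh
    have h2 : ∀ a, M.r s a + ∑ s', M.P s a s' * fmax (t+1) s'
        ≤ M.r s (πm t s) + ∑ s', M.P s (πm t s) s' * fmax (t+1) s' := by
      intro a
      have := hgreedy t ht s a
      unfold MDP.advStep at this
      linarith
    calc fmax t s ≤ ∑ a, πo k s a * (M.r s a + ∑ s', M.P s a s' * fmax (t+1) s') := h1
      _ ≤ ∑ a, πo k s a * (M.r s (πm t s) + ∑ s', M.P s (πm t s) s' * fmax (t+1) s') :=
          Finset.sum_le_sum fun a _ => mul_le_mul_of_nonneg_left (h2 a) (hπ0 k s a)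
      _ = M.r s (πm t s) + ∑ s', M.P s (πm t s) s' * fmax (t+1) s' := by
          rw [← Finset.sum_mul, hπ1 k s, one_mul]
  have hexpect0 : ∀ (t : ℕ) (s : S) (g : S → ℝ), expect (M.pushD πm t 0 s) g = g s := by
    intro t s g
    simp [_root_.expect, MDP.pushD]
  have hpushstep : ∀ t n s (g : S → ℝ), expect (M.pushD πm t (n+1) s) g
      = ∑ s', M.P s (πm t s) s' * expect (M.pushD πm (t+1) n s') g := by
    intro t n s g
    simp only [_root_.expect, MDP.pushD, Finset.sum_mul, Finset.mul_sum]
    rw [Finset.sum_comm]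
    exact Finset.sum_congr rfl fun s' _ => Finset.sum_congr rfl fun s'' _ => by ring
  have hmain : ∀ n t s, t + n ≤ T → fmax t s ≤ M.valD πm t n s + expect (M.pushD πm t n s) (fmax (t+n)) := by
    intro n
    induction n with
    | zero => intro t s _; simp [MDP.valD, hexpect0]
    | succ n ih =>
      intro t s h
      have ht : t < T := by omega
      calc fmax t s ≤ M.r s (πm t s) + ∑ s', M.P s (πm t s) s' * fmax (t+1) s' := hstep t ht s
        _ ≤ M.r s (πm t s) + ∑ s', M.P s (πm t s) s' *
              (M.valD πm (t+1) n s' + expect (M.pushD πm (t+1) n s') (fmax (t+1+n))) := by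
            apply add_le_add_right
            apply Finset.sum_le_sum
            intro s' _
            exact mul_le_mul_of_nonneg_left (ih (t+1) s' (by omega)) (hP0 s (πm t s) s')
        _ = M.valD πm t (n+1) s + expect (M.pushD πm t (n+1) s) (fmax (t+(n+1))) := by
            have harr : t + (n+1) = (t+1) + n := by omega
            rw [harr, hpushstep]
            show _ = (M.r s (πm t s) + ∑ s', M.P s (πm t s) s' * M.valD πm (t+1) n s') + _
            simp only [mul_add, Finset.sum_add_distrib]
            ring
  have hadvID : ∀ t i s, 0 ≤ M.advID T fmax πm t i s := by
    intro t i s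
    rcases le_or_gt t T with hle | hlt
    · have hm : t + min (i+1) (T - t) ≤ T := by omega
      have := hmain (min (i+1) (T-t)) t s hm
      unfold MDP.advID
      linarith
    · have h0 : T - t = 0 := by omega
      unfold MDP.advID
      rw [h0]
      simp [MDP.valD, hexpect0]
  have hadvLD : ∀ t s, 0 ≤ M.advLD T fmax πm lam t s := by
    intro t s
    unfold MDP.advLD
    have h1 : 0 ≤ (1 - lam) * ∑ i ∈ Finset.range (T - t - 1), lam ^ i * M.advID T fmax πm t i s :=
      mul_nonneg (by linarith)
        (Finset.sum_nonneg fun i _ => mul_nonneg (pow_nonneg hlam0 i) (hadvID t i s))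
    have h2 : 0 ≤ lam ^ (T-t-1) * M.advID T fmax πm t (T-t-1) s :=
      mul_nonneg (pow_nonneg hlam0 _) (hadvID _ _ _)
    linarith
  have hsd : ∀ t s, 0 ≤ M.stateDist πn d0 t s := by
    intro t
    induction t with
    | zero => exact hd0
    | succ t ih =>
      intro s
      exact Finset.sum_nonneg fun s' _ => Finset.sum_nonneg fun a _ =>
        mul_nonneg (mul_nonneg (ih s') (hπn0 s' a)) (hP0 s' a s)
  have hexp : ∀ (d g : S → ℝ), (∀ s, 0 ≤ d s) → (∀ s, 0 ≤ g s) → 0 ≤ expect d g :=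
    fun d g hd hg => Finset.sum_nonneg fun s _ => mul_nonneg (hd s) (hg s)
  refine ⟨fun t _ i s => hadvID t i s, fun t _ s => hadvLD t s, ?_⟩
  have hT0 : (0:ℝ) ≤ (T:ℝ) := Nat.cast_nonneg T
  have hX0 : 0 ≤ (T : ℝ)⁻¹ * ∑ t ∈ Finset.range T,
      expect (M.stateDist πn d0 t) (M.advLD T fmax πm lam t) :=
    mul_nonneg (inv_nonneg.2 hT0)
      (Finset.sum_nonneg fun t _ => hexp _ _ (hsd t) (hadvLD t))
  have hY0 : 0 ≤ expect d0 (M.advLD T fmax πm lam 0) := hexp _ _ hd0 (hadvLD 0)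
  nlinarith [mul_nonneg (mul_nonneg (sub_nonneg.2 hlam1) hT0) hX0, mul_nonneg hlam0 hY0]
end

section
/- (Meta performance theorem) Suppose a first-order online algorithm achieves E[Regret_N] ≤ C(βN + √(νN)) for some constant C, where β and ν are the bias and variance of the gradient estimates. Then E[max_{n∈[N]} V^{π_n}(d_0)] ≥ E_{s∼d_0}[max_{k∈[K]} V^k(s)] + E[Δ_N − ε_N(Π)] − C(β + √(ν/N)). -/
open Finset

variable {S A : Type} [Fintype S] [DecidableEq S] [Fintype A]

variable {S A : Type} [Fintype S] [Fintype A]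

/-- The online IL loss `ℓ_n(π) = −T·E_{s∼d^{π_n}}[A^{fmax}(s,π)]`. -/
noncomputable def ilLoss (M : MDP S A) (T : ℕ) (d0 : S → ℝ) (fmax : ℕ → S → ℝ)
    (πn π : S → A → ℝ) : ℝ :=
  -((T : ℝ) * ((T : ℝ)⁻¹ *
      ∑ t ∈ Finset.range T, expect (M.stateDist πn d0 t) (M.advStepPi fmax π t)))

lemma swap3 (d : S → ℝ) (π : S → A → ℝ) (P : S → A → S → ℝ) (g : S → ℝ) :
    ∑ s, d s * ∑ a, π s a * ∑ s', P s a s' * g s'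
      = ∑ s', (∑ s, ∑ a, d s * π s a * P s a s') * g s' := by
  simp only [Finset.mul_sum, Finset.sum_mul]
  conv_rhs => rw [Finset.sum_comm]
  apply Finset.sum_congr rfl; intro s _
  rw [Finset.sum_comm]
  apply Finset.sum_congr rfl; intro a _
  apply Finset.sum_congr rfl; intro s' _
  ring

lemma expect_advStepPi (M : MDP S A) (f : ℕ → S → ℝ) (π : S → A → ℝ)
    (hπ1 : ∀ s, ∑ a, π s a = 1) (d0 : S → ℝ) (t : ℕ) :
    _root_.expect (M.stateDist π d0 t) (M.advStepPi f π t)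
      = _root_.expect (M.stateDist π d0 t) (fun s => ∑ a, π s a * M.r s a)
        + _root_.expect (M.stateDist π d0 (t+1)) (f (t+1))
        - _root_.expect (M.stateDist π d0 t) (f t) := by
  simp only [_root_.expect, MDP.advStepPi, MDP.advStep]
  have h1 : ∀ s, (∑ a, π s a * (M.r s a + (∑ s', M.P s a s' * f (t+1) s') - f t s))
      = (∑ a, π s a * M.r s a) + (∑ a, π s a * ∑ s', M.P s a s' * f (t+1) s') - f t s := by
    intro s
    simp only [mul_sub, mul_add]
    rw [Finset.sum_sub_distrib, Finset.sum_add_distrib, ← Finset.sum_mul, hπ1, one_mul]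
  calc ∑ s, M.stateDist π d0 t s * ∑ a, π s a * (M.r s a + (∑ s', M.P s a s' * f (t+1) s') - f t s)
      = ∑ s, (M.stateDist π d0 t s * (∑ a, π s a * M.r s a)
          + M.stateDist π d0 t s * (∑ a, π s a * ∑ s', M.P s a s' * f (t+1) s')
          - M.stateDist π d0 t s * f t s) := by
        apply Finset.sum_congr rfl; intro s _; rw [h1 s]; ring
    _ = (∑ s, M.stateDist π d0 t s * (∑ a, π s a * M.r s a))
          + (∑ s, M.stateDist π d0 t s * ∑ a, π s a * ∑ s', M.P s a s' * f (t+1) s')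
          - ∑ s, M.stateDist π d0 t s * f t s := by
        rw [Finset.sum_sub_distrib, Finset.sum_add_distrib]
    _ = _ := by
        rw [swap3]
        rfl

lemma stateDist_shift (M : MDP S A) (π : S → A → ℝ) (d0 : S → ℝ) :
    ∀ t, M.stateDist π d0 (t+1) = M.stateDist π (M.stateDist π d0 1) t := by
  intro t
  induction t with
  | zero => rfl
  | succ t ih =>
      show (fun s' => ∑ s, ∑ a, M.stateDist π d0 (t+1) s * π s a * M.P s a s') = _
      rw [ih]; rfl

lemma expect_val (M : MDP S A) (π : S → A → ℝ) :
    ∀ (T : ℕ) (d : S → ℝ), _root_.expect d (M.val π T)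
      = ∑ t ∈ Finset.range T,
          _root_.expect (M.stateDist π d t) (fun s => ∑ a, π s a * M.r s a) := by
  intro T
  induction T with
  | zero => intro d; simp [_root_.expect, MDP.val]
  | succ T ih =>
      intro d
      rw [Finset.sum_range_succ']
      have key : _root_.expect d (M.val π (T+1))
          = _root_.expect d (fun s => ∑ a, π s a * M.r s a)
            + _root_.expect (M.stateDist π d 1) (M.val π T) := by
        simp only [_root_.expect, MDP.val]
        have : ∀ s, d s * (∑ a, π s a * (M.r s a + ∑ s', M.P s a s' * M.val π T s'))
            = d s * (∑ a, π s a * M.r s a) + d s * ∑ a, π s a * ∑ s', M.P s a s' * M.val π T s' := by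
          intro s
          simp only [mul_add, Finset.sum_add_distrib]
        rw [Finset.sum_congr rfl (fun s _ => this s), Finset.sum_add_distrib]
        congr 1
        rw [swap3]
        rfl
      rw [key, ih, add_comm]
      congr 1
      apply Finset.sum_congr rfl; intro t _
      rw [stateDist_shift M π d t]

lemma val_eq_adv (M : MDP S A) (π : S → A → ℝ) (hπ1 : ∀ s, ∑ a, π s a = 1)
    (T : ℕ) (f : ℕ → S → ℝ) (hfT : ∀ s, f T s = 0) (d0 : S → ℝ) :
    _root_.expect d0 (M.val π T)
      = _root_.expect d0 (f 0)
        + ∑ t ∈ Finset.range T, _root_.expect (M.stateDist π d0 t) (M.advStepPi f π t) := by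
  have htel : ∑ t ∈ Finset.range T,
      (_root_.expect (M.stateDist π d0 (t+1)) (f (t+1)) - _root_.expect (M.stateDist π d0 t) (f t))
      = _root_.expect (M.stateDist π d0 T) (f T) - _root_.expect (M.stateDist π d0 0) (f 0) :=
    Finset.sum_range_sub (fun t => _root_.expect (M.stateDist π d0 t) (f t)) T
  have hT0 : _root_.expect (M.stateDist π d0 T) (f T) = 0 := by
    simp [_root_.expect, hfT]
  calc _root_.expect d0 (M.val π T)
      = ∑ t ∈ Finset.range T,
          _root_.expect (M.stateDist π d0 t) (fun s => ∑ a, π s a * M.r s a) := expect_val M π T d0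
    _ = ∑ t ∈ Finset.range T, (_root_.expect (M.stateDist π d0 t) (M.advStepPi f π t)
          - (_root_.expect (M.stateDist π d0 (t+1)) (f (t+1))
              - _root_.expect (M.stateDist π d0 t) (f t))) := by
        apply Finset.sum_congr rfl; intro t _
        rw [expect_advStepPi M f π hπ1 d0 t]; ring
    _ = _ := by
        rw [Finset.sum_sub_distrib, htel, hT0]
        show _ - (0 - _root_.expect d0 (f 0)) = _
        ring

lemma ilLoss_eq (M : MDP S A) (T : ℕ) (d0 : S → ℝ) (fmax : ℕ → S → ℝ) (πn π : S → A → ℝ) :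
    ilLoss M T d0 fmax πn π
      = -∑ t ∈ Finset.range T, _root_.expect (M.stateDist πn d0 t) (M.advStepPi fmax π t) := by
  unfold ilLoss
  rcases Nat.eq_zero_or_pos T with h | h
  · subst h; simp
  · rw [← mul_assoc, mul_inv_cancel₀ (Nat.cast_ne_zero.mpr h.ne'), one_mul]

lemma inf'_affine {ι : Type} (Pc : Finset ι) (hPc : Pc.Nonempty) (g : ι → ℝ) (c B : ℝ)
    (hc : 0 ≤ c) :
    Pc.inf' hPc (fun p => c * (g p - B)) = c * (Pc.inf' hPc g - B) := by
  have hmono : Monotone (fun x : ℝ => c * (x - B)) := by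
    intro x y hxy
    have := sub_le_sub_right hxy B
    exact mul_le_mul_of_nonneg_left this hc
  exact (Finset.apply_inf'_eq_inf'_comp hPc (fun x : ℝ => c * (x - B))
    (fun x y => hmono.map_min)).symm

/-- **Meta performance theorem.** Randomness of the feedback and of the online algorithm is
modeled by a finite outcome space `Ω` with probability weights `w`. If the (expected) regret
satisfies `E[Regret_N] ≤ C(βN + √(νN))`, then
`E[max_{n<N} V^{π_n}(d_0)] ≥ E_{s∼d_0}[max_k V^k(s)] + E[Δ_N − ε_N(Π)] − C(β + √(ν/N))`. -/
theorem meta_performance_theorem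
    {ι Ω : Type} [Fintype Ω] (M : MDP S A) (T : ℕ) (K : ℕ)
    (πo : Fin K → S → A → ℝ)
    (hπ1 : ∀ k s, ∑ a, πo k s a = 1) (hπ0 : ∀ k s a, 0 ≤ πo k s a)
    (hP0 : ∀ s a s', 0 ≤ M.P s a s') (hP1 : ∀ s a, ∑ s', M.P s a s' = 1)
    (fmax : ℕ → S → ℝ)
    (hub : ∀ t s k, M.val (πo k) (T - t) s ≤ fmax t s)
    (hach : ∀ t s, ∃ k, fmax t s = M.val (πo k) (T - t) s)
    (πmax : S → A → ℝ) (hπmax1 : ∀ s, ∑ a, πmax s a = 1)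
    (d0 : S → ℝ)
    (N : ℕ) (hN : 0 < N)
    (w : Ω → ℝ) (hw0 : ∀ ω, 0 ≤ w ω) (hw1 : ∑ ω, w ω = 1)
    (πs : Ω → ℕ → S → A → ℝ) (hπs1 : ∀ ω n s, ∑ a, πs ω n s a = 1)
    (Pc : Finset ι) (hPc : Pc.Nonempty) (pol : ι → S → A → ℝ)
    (C β ν : ℝ) (hC : 0 ≤ C) (hν : 0 ≤ ν)
    (hregret :
      ∑ ω, w ω *
          (∑ n ∈ Finset.range N, ilLoss M T d0 fmax (πs ω n) (πs ω n)
            - Pc.inf' hPc (fun p =>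
                ∑ n ∈ Finset.range N, ilLoss M T d0 fmax (πs ω n) (pol p))) ≤
        C * (β * N + Real.sqrt (ν * N))) :
    ∑ ω, w ω *
        (Finset.range N).sup' (Finset.nonempty_range_iff.mpr hN.ne')
          (fun n => expect d0 (M.val (πs ω n) T)) ≥
      expect d0 (fmax 0)
        + ∑ ω, w ω *
            ((-(N : ℝ)⁻¹ * ∑ n ∈ Finset.range N, ilLoss M T d0 fmax (πs ω n) πmax)
              - Pc.inf' hPc (fun p => (N : ℝ)⁻¹ *
                  (∑ n ∈ Finset.range N, ilLoss M T d0 fmax (πs ω n) (pol p)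
                    - ∑ n ∈ Finset.range N, ilLoss M T d0 fmax (πs ω n) πmax)))
        - C * (β + Real.sqrt (ν / N)) := by
  have hNR : (0:ℝ) < (N:ℝ) := Nat.cast_pos.mpr hN
  have hNinv : (0:ℝ) ≤ (N:ℝ)⁻¹ := le_of_lt (inv_pos.mpr hNR)
  set F := _root_.expect d0 (fmax 0) with hF
  set L : Ω → ℝ := fun ω => ∑ n ∈ Finset.range N, ilLoss M T d0 fmax (πs ω n) (πs ω n) with hL
  set I : Ω → ℝ := fun ω =>
    Pc.inf' hPc (fun p => ∑ n ∈ Finset.range N, ilLoss M T d0 fmax (πs ω n) (pol p)) with hI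
  -- fmax vanishes at horizon T
  have hT0 : ∀ s, fmax T s = 0 := by
    intro s
    obtain ⟨k, hk⟩ := hach T s
    rw [hk, Nat.sub_self]
    rfl
  -- value identity
  have hV : ∀ ω n, _root_.expect d0 (M.val (πs ω n) T)
      = F - ilLoss M T d0 fmax (πs ω n) (πs ω n) := by
    intro ω n
    rw [val_eq_adv M (πs ω n) (hπs1 ω n) T fmax hT0 d0, ilLoss_eq]
    ring
  -- sup' ≥ average
  have hsup : ∀ ω, (N:ℝ)⁻¹ * ∑ n ∈ Finset.range N, _root_.expect d0 (M.val (πs ω n) T)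
      ≤ (Finset.range N).sup' (Finset.nonempty_range_iff.mpr hN.ne')
          (fun n => _root_.expect d0 (M.val (πs ω n) T)) := by
    intro ω
    rw [inv_mul_le_iff₀ hNR]
    have := Finset.sum_le_card_nsmul (Finset.range N)
      (fun n => _root_.expect d0 (M.val (πs ω n) T))
      ((Finset.range N).sup' (Finset.nonempty_range_iff.mpr hN.ne')
        (fun n => _root_.expect d0 (M.val (πs ω n) T)))
      (fun n hn => Finset.le_sup' (fun m => _root_.expect d0 (M.val (πs ω m) T)) hn)
    simpa [Finset.card_range, nsmul_eq_mul] using this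
  -- rewrite RHS ω-term
  have hterm : ∀ ω,
      (-(N : ℝ)⁻¹ * ∑ n ∈ Finset.range N, ilLoss M T d0 fmax (πs ω n) πmax)
        - Pc.inf' hPc (fun p => (N : ℝ)⁻¹ *
            (∑ n ∈ Finset.range N, ilLoss M T d0 fmax (πs ω n) (pol p)
              - ∑ n ∈ Finset.range N, ilLoss M T d0 fmax (πs ω n) πmax))
      = -(N:ℝ)⁻¹ * I ω := by
    intro ω
    rw [inf'_affine Pc hPc _ ((N:ℝ)⁻¹) _ hNinv]
    ring
  -- average of losses bound
  have hreg2 : ∑ ω, w ω * ((N:ℝ)⁻¹ * (L ω - I ω)) ≤ C * (β + Real.sqrt (ν / N)) := by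
    have hsq : (N:ℝ)⁻¹ * Real.sqrt (ν * N) = Real.sqrt (ν / N) := by
      have hs : (0:ℝ) < Real.sqrt N := Real.sqrt_pos.mpr hNR
      have h : Real.sqrt (N:ℝ) * Real.sqrt (N:ℝ) = (N:ℝ) := Real.mul_self_sqrt hNR.le
      rw [Real.sqrt_mul hν, Real.sqrt_div hν, eq_div_iff hs.ne', mul_assoc, mul_assoc, h]
      field_simp
    calc ∑ ω, w ω * ((N:ℝ)⁻¹ * (L ω - I ω))
        = (N:ℝ)⁻¹ * ∑ ω, w ω * (L ω - I ω) := by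
          rw [Finset.mul_sum]; apply Finset.sum_congr rfl; intros; ring
      _ ≤ (N:ℝ)⁻¹ * (C * (β * N + Real.sqrt (ν * N))) :=
          mul_le_mul_of_nonneg_left hregret hNinv
      _ = C * (β + Real.sqrt (ν / N)) := by
          rw [← hsq]; field_simp
  -- main chain
  have hmain : ∑ ω, w ω *
      (Finset.range N).sup' (Finset.nonempty_range_iff.mpr hN.ne')
        (fun n => _root_.expect d0 (M.val (πs ω n) T))
      ≥ F + ∑ ω, w ω * (-(N:ℝ)⁻¹ * L ω) := by
    have h1 : ∀ ω, w ω * (F + (-(N:ℝ)⁻¹ * L ω))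
        ≤ w ω * (Finset.range N).sup' (Finset.nonempty_range_iff.mpr hN.ne')
            (fun n => _root_.expect d0 (M.val (πs ω n) T)) := by
      intro ω
      apply mul_le_mul_of_nonneg_left _ (hw0 ω)
      have := hsup ω
      have heq : (N:ℝ)⁻¹ * ∑ n ∈ Finset.range N, _root_.expect d0 (M.val (πs ω n) T)
          = F + (-(N:ℝ)⁻¹ * L ω) := by
        have : ∑ n ∈ Finset.range N, _root_.expect d0 (M.val (πs ω n) T)
            = (N:ℝ) * F - L ω := by
          rw [hL]
          simp only [hV]
          rw [Finset.sum_sub_distrib, Finset.sum_const, Finset.card_range]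
          simp
        rw [this]; field_simp; ring
      linarith [heq ▸ this]
    calc ∑ ω, w ω * (Finset.range N).sup' (Finset.nonempty_range_iff.mpr hN.ne')
          (fun n => _root_.expect d0 (M.val (πs ω n) T))
        ≥ ∑ ω, w ω * (F + (-(N:ℝ)⁻¹ * L ω)) := Finset.sum_le_sum (fun ω _ => h1 ω)
      _ = F + ∑ ω, w ω * (-(N:ℝ)⁻¹ * L ω) := by
          simp only [mul_add, Finset.sum_add_distrib, ← Finset.sum_mul, hw1, one_mul]
  have hRHS : ∑ ω, w ω *
      ((-(N : ℝ)⁻¹ * ∑ n ∈ Finset.range N, ilLoss M T d0 fmax (πs ω n) πmax)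
        - Pc.inf' hPc (fun p => (N : ℝ)⁻¹ *
            (∑ n ∈ Finset.range N, ilLoss M T d0 fmax (πs ω n) (pol p)
              - ∑ n ∈ Finset.range N, ilLoss M T d0 fmax (πs ω n) πmax)))
      = ∑ ω, w ω * (-(N:ℝ)⁻¹ * I ω) := by
    apply Finset.sum_congr rfl; intro ω _; rw [hterm ω]
  have hgap : ∑ ω, w ω * (-(N:ℝ)⁻¹ * I ω) - ∑ ω, w ω * (-(N:ℝ)⁻¹ * L ω)
      ≤ C * (β + Real.sqrt (ν / N)) := by
    calc ∑ ω, w ω * (-(N:ℝ)⁻¹ * I ω) - ∑ ω, w ω * (-(N:ℝ)⁻¹ * L ω)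
        = ∑ ω, w ω * ((N:ℝ)⁻¹ * (L ω - I ω)) := by
          rw [← Finset.sum_sub_distrib]; apply Finset.sum_congr rfl; intros; ring
      _ ≤ C * (β + Real.sqrt (ν / N)) := hreg2
  rw [ge_iff_le, hRHS]
  linarith [hmain]
end
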